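/- Suppose P and Q are joint distributions on finitely-valued variables X_1, …, X_n each satisfying the Markov chain property along X_1 → X_2 → ⋯ → X_n, i.e. P(x) = P_{X_1}(x_1)·∏_{i=2}^{n} P_{X_i | X_{i−1}}(x_i | x_{i−1}) and Q(x) = Q_{X_1}(x_1)·∏_{i=2}^{n} Q_{X_i | X_{i−1}}(x_i | x_{i−1}). Then H²(P, Q) ≤ H²(P_{X_1}, Q_{X_1}) + Σ_{i=2}^{n} H²(P_{X_{i−1},X_i}, Q_{X_{i−1},X_i}); in particular, if H²(P, Q) ≥ ε then there exists i with H²(P_{X_{i−1},X_i}, Q_{X_{i−1},X_i}) ≥ ε/n. -/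

import Mathlib

/-- The squared Hellinger distance `H²(p,q) = 1 - ∑ₖ √(pₖ qₖ)` between two
probability mass functions on a finite type. -/
noncomputable def sqHellinger {α : Type*} [Fintype α] (p q : α → ℝ) : ℝ :=
  1 - ∑ k, Real.sqrt (p k * q k)

open scoped Classical in
/-- The marginal of a joint distribution `P` on coordinates in the finite set `T`. -/
noncomputable def marg {ι : Type*} [Fintype ι] {α : ι → Type*} [∀ i, Fintype (α i)]
    (P : (∀ i, α i) → ℝ) (T : Finset ι) : ((i : T) → α i) → ℝ :=
  fun y => ∑ x : ∀ i, α i, if (∀ i : T, x i = y i) then P x else 0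


/-! With `BC(p, q) = ∑ √(p q) = 1 - H²(p, q)`, it suffices to glue the chain one coordinate at a
time: `H²(P_{≤i+1}, Q_{≤i+1}) ≤ H²(P_{≤i}, Q_{≤i}) + H²(P_{i,i+1}, Q_{i,i+1})`. Split the three
coefficients by the value `v` of `X_i` into `g v`, `t v`, `u v`, and let
`s v = √(P_{X_i}(v) Q_{X_i}(v))`. The Markov property gives `u v * s v = g v * t v`, and
Cauchy–Schwarz gives `g v ≤ s v`, `t v ≤ s v` and `∑ s v ≤ 1`. As `(s - g) (s - t) ≥ 0`, this
forces `u ≥ g + t - s`, and summing over `v` proves the step. The `ε / n` bound then follows by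
averaging, after bounding `H²(P_{X_1}, Q_{X_1})` by the first pair term (data processing). -/

open Finset Function

section Pushforward

variable {β γ δ : Type*} [Fintype β] [DecidableEq γ]

def pushforward (f : β → γ) (p : β → ℝ) (c : γ) : ℝ :=
  ∑ b with f b = c, p b

theorem pushforward_nonneg {f : β → γ} {p : β → ℝ} (hp : ∀ b, 0 ≤ p b) (c : γ) :
    0 ≤ pushforward f p c :=
  sum_nonneg fun b _ => hp b

theorem sum_pushforward [Fintype γ] (f : β → γ) (p : β → ℝ) : ∑ c, pushforward f p c = ∑ b, p b :=
  sum_fiberwise univ f p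

theorem pushforward_comp [Fintype γ] [DecidableEq δ] (g : γ → δ) (f : β → γ) (p : β → ℝ) :
    pushforward (g ∘ f) p = pushforward g (pushforward f p) := by
  ext d
  simp only [pushforward]
  rw [sum_fiberwise_eq_sum_filter]
  simp

theorem pushforward_apply_of_injective {f : β → γ} (hf : Injective f) (p : β → ℝ) (b : β) :
    pushforward f p (f b) = p b := by
  refine sum_eq_single_of_mem b (by simp) fun b' hb' hne => ?_
  exact absurd (hf (mem_filter.1 hb').2) hne

theorem pushforward_fst_apply {A B : Type*} [Fintype A] [Fintype B] [DecidableEq A]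
    (p : A × B → ℝ) (a : A) : pushforward Prod.fst p a = ∑ b, p (a, b) := by
  rw [pushforward, sum_filter, Fintype.sum_prod_type, Fintype.sum_eq_single a]
  · simp
  · intro a' ha'
    simp [ha']

end Pushforward

theorem Real.sum_sqrt_mul_le_sqrt_sum_mul_sum {ι : Type*} (s : Finset ι) {f g : ι → ℝ}
    (hf : ∀ i, 0 ≤ f i) (hg : ∀ i, 0 ≤ g i) :
    ∑ i ∈ s, √(f i * g i) ≤ √((∑ i ∈ s, f i) * ∑ i ∈ s, g i) := by
  simp_rw [Real.sqrt_mul (hf _), Real.sqrt_mul (sum_nonneg fun i _ => hf i)]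
  exact Real.sum_sqrt_mul_sqrt_le s hf hg

section Hellinger

variable {β γ : Type*} [Fintype β] [Fintype γ]

theorem sqHellinger_nonneg {p q : β → ℝ} (hp0 : ∀ b, 0 ≤ p b) (hq0 : ∀ b, 0 ≤ q b)
    (hp1 : ∑ b, p b = 1) (hq1 : ∑ b, q b = 1) : 0 ≤ sqHellinger p q := by
  have := Real.sum_sqrt_mul_le_sqrt_sum_mul_sum univ hp0 hq0
  rw [hp1, hq1, mul_one, Real.sqrt_one] at this
  exact sub_nonneg.2 this

variable [DecidableEq γ]

theorem sqHellinger_pushforward_le (f : β → γ) {p q : β → ℝ} (hp0 : ∀ b, 0 ≤ p b)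
    (hq0 : ∀ b, 0 ≤ q b) : sqHellinger (pushforward f p) (pushforward f q) ≤ sqHellinger p q := by
  refine sub_le_sub_left ?_ 1
  rw [← sum_fiberwise univ f]
  exact sum_le_sum fun c _ => Real.sum_sqrt_mul_le_sqrt_sum_mul_sum _ hp0 hq0

theorem sqHellinger_pushforward_of_injective {f : β → γ} (hf : Injective f) (p q : β → ℝ) :
    sqHellinger (pushforward f p) (pushforward f q) = sqHellinger p q := by
  refine congrArg (1 - ·) (Fintype.sum_of_injective f hf _ _ (fun c hc => ?_) fun b => ?_).symm
  · have hzero : ∀ r : β → ℝ, pushforward f r c = 0 := fun r =>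
      sum_eq_zero fun b hb => absurd ⟨b, (mem_filter.1 hb).2⟩ hc
    simp [hzero]
  · rw [pushforward_apply_of_injective hf, pushforward_apply_of_injective hf]

end Hellinger

theorem Finset.restrict₂_prod_apply_injective {ι : Type*} [DecidableEq ι] {α : ι → Type*}
    {s t : Finset ι} (hst : s ⊆ t) {k : ι} (hk : k ∈ t) (hts : t ⊆ insert k s) :
    Injective fun z : (∀ j : t, α j) => (restrict₂ hst z, z ⟨k, hk⟩) := by
  intro z z' h
  obtain ⟨hs, hk'⟩ := Prod.mk.inj h
  funext ⟨j, hj⟩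
  rcases mem_insert.1 (hts hj) with rfl | hjs
  · exact hk'
  · exact congrFun hs ⟨j, hjs⟩

theorem Finset.restrict_prod_apply_surjective {ι : Type*} [DecidableEq ι] {α : ι → Type*}
    [∀ i, Nonempty (α i)] (C : Finset ι) {k : ι} (hk : k ∉ C) :
    Surjective fun ω : (∀ i, α i) => (C.restrict ω, ω k) := by
  rintro ⟨x, w⟩
  obtain ⟨ω, rfl⟩ := Subtype.surjective_restrict (β := α) (· ∈ C) x
  exact ⟨update ω k w, Prod.ext (funext fun j => update_of_ne (ne_of_mem_of_not_mem j.2 hk) _ _)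
    (update_self _ _ _)⟩

section Marginal

variable {ι : Type*} [Fintype ι] [DecidableEq ι] {α : ι → Type*} [∀ i, Fintype (α i)]

theorem marg_eq_pushforward (P : (∀ i, α i) → ℝ) (T : Finset ι)
    [DecidableEq ((i : T) → α i)] : marg P T = pushforward T.restrict P := by
  ext y
  simp only [marg, pushforward, sum_filter]
  congr! 2 with x
  exact funext_iff.symm

theorem marg_nonneg {P : (∀ i, α i) → ℝ} (hP : ∀ x, 0 ≤ P x) (T : Finset ι)
    (y : (i : T) → α i) : 0 ≤ marg P T y := by
  classical
  rw [marg_eq_pushforward]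
  exact pushforward_nonneg hP y

theorem pushforward_restrict₂_marg {S T : Finset ι} (h : S ⊆ T) (P : (∀ i, α i) → ℝ)
    [DecidableEq ((i : S) → α i)] :
    pushforward (restrict₂ h) (marg P T) = marg P S := by
  classical
  rw [marg_eq_pushforward, marg_eq_pushforward, ← pushforward_comp, restrict₂_comp_restrict]

theorem sqHellinger_marg_le_of_subset {S T : Finset ι} (h : S ⊆ T) {P Q : (∀ i, α i) → ℝ}
    (hP0 : ∀ x, 0 ≤ P x) (hQ0 : ∀ x, 0 ≤ Q x) :
    sqHellinger (marg P S) (marg Q S) ≤ sqHellinger (marg P T) (marg Q T) := by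
  classical
  rw [← pushforward_restrict₂_marg h P, ← pushforward_restrict₂_marg h Q]
  exact sqHellinger_pushforward_le _ (marg_nonneg hP0 T) (marg_nonneg hQ0 T)

theorem sqHellinger_marg_univ (P Q : (∀ i, α i) → ℝ) :
    sqHellinger (marg P univ) (marg Q univ) = sqHellinger P Q := by
  classical
  rw [marg_eq_pushforward, marg_eq_pushforward]
  exact sqHellinger_pushforward_of_injective
    (fun x y h => funext fun i => congrFun h ⟨i, mem_univ i⟩) P Q

end Marginal

theorem add_sub_le_of_mul_eq {g t s u : ℝ} (hs : 0 ≤ s) (hu : 0 ≤ u) (hgs : g ≤ s) (hts : t ≤ s)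
    (h : u * s = g * t) : g + t - s ≤ u := by
  rcases hs.eq_or_lt with rfl | hs
  · linarith
  · refine le_of_mul_le_mul_right ?_ hs
    rw [h]
    nlinarith [mul_nonneg (sub_nonneg.2 hgs) (sub_nonneg.2 hts)]

section MarkovStep

variable {A B V : Type*} [Fintype A] [Fintype B] [Fintype V] [DecidableEq V]

theorem sum_add_sum_sub_one_le_of_mul_eq (π : A → V) {R : A × B → ℝ} {G : A → ℝ}
    {T : V × B → ℝ} {S : V → ℝ} (hR : ∀ z, 0 ≤ R z) (hS : ∀ v, 0 ≤ S v)
    (hGS : ∀ v, ∑ x with π x = v, G x ≤ S v) (hTS : ∀ v, ∑ w, T (v, w) ≤ S v)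
    (hS1 : ∑ v, S v ≤ 1) (h : ∀ x w, R (x, w) * S (π x) = G x * T (π x, w)) :
    ∑ x, G x + ∑ y, T y - 1 ≤ ∑ z, R z := by
  set g : V → ℝ := fun v => ∑ x with π x = v, G x
  set t : V → ℝ := fun v => ∑ w, T (v, w)
  set u : V → ℝ := fun v => ∑ x with π x = v, ∑ w, R (x, w)
  have hus : ∀ v, u v * S v = g v * t v := fun v => by
    simp only [u, g, t]
    rw [Finset.sum_mul_sum, Finset.sum_mul]
    refine Finset.sum_congr rfl fun x hx => ?_
    obtain rfl := (mem_filter.1 hx).2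
    rw [Finset.sum_mul]
    exact Finset.sum_congr rfl fun w _ => h x w
  have hfib : ∑ v, (g v + t v - S v) ≤ ∑ v, u v := sum_le_sum fun v _ =>
    add_sub_le_of_mul_eq (hS v) (sum_nonneg fun _ _ => sum_nonneg fun _ _ => hR _) (hGS v)
      (hTS v) (hus v)
  rw [sum_sub_distrib, sum_add_distrib] at hfib
  rw [← sum_fiberwise univ π G, Fintype.sum_prod_type T, Fintype.sum_prod_type R,
    ← sum_fiberwise univ π]
  linarith

variable [DecidableEq A] [DecidableEq B]

theorem sqHellinger_prod_le_of_markov (π : A → V) {p q : A × B → ℝ}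
    (hp0 : ∀ z, 0 ≤ p z) (hq0 : ∀ z, 0 ≤ q z) (hp1 : ∑ z, p z = 1) (hq1 : ∑ z, q z = 1)
    (hp : ∀ x w, p (x, w) * pushforward (π ∘ Prod.fst) p (π x) =
      pushforward Prod.fst p x * pushforward (Prod.map π id) p (π x, w))
    (hq : ∀ x w, q (x, w) * pushforward (π ∘ Prod.fst) q (π x) =
      pushforward Prod.fst q x * pushforward (Prod.map π id) q (π x, w)) :
    sqHellinger p q ≤ sqHellinger (pushforward Prod.fst p) (pushforward Prod.fst q) +
      sqHellinger (pushforward (Prod.map π id) p) (pushforward (Prod.map π id) q) := by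
  set pA := pushforward Prod.fst p
  set qA := pushforward Prod.fst q
  set pY := pushforward (Prod.map π id) p
  set qY := pushforward (Prod.map π id) q
  set pV := pushforward (π ∘ Prod.fst) p
  set qV := pushforward (π ∘ Prod.fst) q
  have hpV : pV = pushforward π pA := pushforward_comp π Prod.fst p
  have hqV : qV = pushforward π qA := pushforward_comp π Prod.fst q
  have hpVY : ∀ v, pV v = ∑ w, pY (v, w) := fun v => by
    rw [← pushforward_fst_apply]
    exact congrFun (pushforward_comp Prod.fst (Prod.map π id) p) v
  have hqVY : ∀ v, qV v = ∑ w, qY (v, w) := fun v => by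
    rw [← pushforward_fst_apply]
    exact congrFun (pushforward_comp Prod.fst (Prod.map π id) q) v
  have hmarkov : ∀ x w, √(p (x, w) * q (x, w)) * √(pV (π x) * qV (π x)) =
      √(pA x * qA x) * √(pY (π x, w) * qY (π x, w)) := fun x w => by
    rw [← Real.sqrt_mul (mul_nonneg (hp0 _) (hq0 _)),
      ← Real.sqrt_mul (mul_nonneg (pushforward_nonneg hp0 _) (pushforward_nonneg hq0 _))]
    congr 1
    linear_combination (q (x, w) * qV (π x)) * hp x w + (pA x * pY (π x, w)) * hq x w
  have hAV : ∀ v, ∑ x with π x = v, √(pA x * qA x) ≤ √(pV v * qV v) := fun v => by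
    rw [hpV, hqV]
    exact Real.sum_sqrt_mul_le_sqrt_sum_mul_sum _ (pushforward_nonneg hp0) (pushforward_nonneg hq0)
  have hYV : ∀ v, ∑ w, √(pY (v, w) * qY (v, w)) ≤ √(pV v * qV v) := fun v => by
    rw [hpVY, hqVY]
    exact Real.sum_sqrt_mul_le_sqrt_sum_mul_sum _ (fun _ => pushforward_nonneg hp0 _)
      (fun _ => pushforward_nonneg hq0 _)
  have hV1 : ∑ v, √(pV v * qV v) ≤ 1 := by
    have := sqHellinger_nonneg (pushforward_nonneg hp0) (pushforward_nonneg hq0)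
      (by rw [sum_pushforward, hp1]) (by rw [sum_pushforward, hq1]) (p := pV) (q := qV)
    rw [sqHellinger] at this
    linarith
  have := sum_add_sum_sub_one_le_of_mul_eq π (R := fun z => √(p z * q z))
    (T := fun y => √(pY y * qY y)) (fun _ => Real.sqrt_nonneg _) (fun _ => Real.sqrt_nonneg _)
    hAV hYV hV1 hmarkov
  rw [sqHellinger, sqHellinger, sqHellinger]
  linarith

end MarkovStep

section MarkovMarginal

variable {ι : Type*} [Fintype ι] [DecidableEq ι] {α : ι → Type*} [∀ i, Fintype (α i)]

/-- `X_k` is conditionally independent of `X_C` given `X_c`, written without division. -/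
def IsMarkovStep (P : (∀ i, α i) → ℝ) (C : Finset ι) (c k : ι) : Prop :=
  ∀ x, marg P (insert k C) ((insert k C).restrict x) * marg P {c} (restrict {c} x) =
    marg P C (C.restrict x) * marg P {c, k} (restrict {c, k} x)

theorem sqHellinger_marg_insert_le {P Q : (∀ i, α i) → ℝ}
    (hP0 : ∀ x, 0 ≤ P x) (hP1 : ∑ x, P x = 1) (hQ0 : ∀ x, 0 ≤ Q x) (hQ1 : ∑ x, Q x = 1)
    {C : Finset ι} {c k : ι} (hc : c ∈ C) (hk : k ∉ C)
    (hP : IsMarkovStep P C c k) (hQ : IsMarkovStep Q C c k) :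
    sqHellinger (marg P (insert k C)) (marg Q (insert k C)) ≤
      sqHellinger (marg P C) (marg Q C) + sqHellinger (marg P {c, k}) (marg Q {c, k}) := by
  classical
  obtain ⟨ω₀⟩ : Nonempty (∀ i, α i) :=
    univ_nonempty_iff.1 (nonempty_of_sum_ne_zero (hP1 ▸ one_ne_zero))
  have : ∀ i, Nonempty (α i) := fun i => ⟨ω₀ i⟩
  -- `Z` identifies the `insert k C`-marginal with a mass function on `(C-part) × α k`.
  let Z : (∀ i, α i) → (∀ j : C, α j) × α k := fun ω => (C.restrict ω, ω k)
  let π : (∀ j : C, α j) → (∀ j : ({c} : Finset ι), α j) :=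
    restrict₂ (singleton_subset_iff.2 hc)
  let eS := fun z : (∀ j : (insert k C : Finset ι), α j) =>
    (restrict₂ (subset_insert k C) z, z ⟨k, mem_insert_self k C⟩)
  let eP := fun y : (∀ j : ({c, k} : Finset ι), α j) =>
    (restrict₂ (singleton_subset_iff.2 (mem_insert_self c {k})) y, y ⟨k, by simp⟩)
  have heS : Injective eS := restrict₂_prod_apply_injective _ _ subset_rfl
  have heP : Injective eP := restrict₂_prod_apply_injective _ _ (by intro j; simp; tauto)
  have hX : ∀ R, pushforward Prod.fst (pushforward Z R) = marg R C := fun R => by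
    rw [← pushforward_comp, marg_eq_pushforward]
    rfl
  have hV : ∀ R, pushforward (π ∘ Prod.fst) (pushforward Z R) = marg R {c} := fun R => by
    rw [← pushforward_comp, marg_eq_pushforward]
    rfl
  have hY : ∀ R, pushforward (Prod.map π id) (pushforward Z R) =
      pushforward eP (marg R {c, k}) := fun R => by
    rw [← pushforward_comp, marg_eq_pushforward, ← pushforward_comp]
    rfl
  have hZ : ∀ R, pushforward Z R = pushforward eS (marg R (insert k C)) := fun R => by
    rw [marg_eq_pushforward, ← pushforward_comp]
    rfl
  have hmarkov : ∀ R, IsMarkovStep R C c k →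
      ∀ x w, pushforward Z R (x, w) * pushforward (π ∘ Prod.fst) (pushforward Z R) (π x) =
        pushforward Prod.fst (pushforward Z R) x *
          pushforward (Prod.map π id) (pushforward Z R) (π x, w) := by
    intro R hR x w
    obtain ⟨ω, hω⟩ := restrict_prod_apply_surjective C hk (x, w)
    obtain ⟨rfl, rfl⟩ := Prod.mk.inj hω
    have hS : pushforward eS (marg R (insert k C)) (Z ω) =
        marg R (insert k C) ((insert k C).restrict ω) :=
      pushforward_apply_of_injective heS _ ((insert k C).restrict ω)
    have hCK : pushforward eP (marg R {c, k}) (π (Z ω).1, (Z ω).2) =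
        marg R {c, k} (restrict {c, k} ω) :=
      pushforward_apply_of_injective heP _ (restrict {c, k} ω)
    rw [hX, hV, hY, hZ, hS, hCK]
    exact hR ω
  have key := sqHellinger_prod_le_of_markov π (pushforward_nonneg hP0) (pushforward_nonneg hQ0)
    (by rw [sum_pushforward, hP1]) (by rw [sum_pushforward, hQ1]) (hmarkov P hP) (hmarkov Q hQ)
  rwa [hX, hX, hY, hY, hZ, hZ, sqHellinger_pushforward_of_injective heS,
    sqHellinger_pushforward_of_injective heP] at key

end MarkovMarginal

theorem Fin.apply_last_le_apply_zero_add_sum {M : Type*} [AddCommMonoid M] [PartialOrder M]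
    [IsOrderedAddMonoid M] {m : ℕ} {b : Fin (m + 1) → M} {c : Fin m → M}
    (h : ∀ i, b i.succ ≤ b i.castSucc + c i) : b (Fin.last m) ≤ b 0 + ∑ i, c i := by
  induction m with
  | zero => simp
  | succ m ih =>
    have hlast := ih (b := fun j => b j.castSucc) (c := fun i => c i.castSucc) fun i =>
      Fin.succ_castSucc i ▸ h i.castSucc
    rw [Fin.castSucc_zero] at hlast
    calc b (Fin.last (m + 1)) ≤ b (Fin.last m).castSucc + c (Fin.last m) := h (Fin.last m)
      _ ≤ b 0 + ∑ i : Fin m, c i.castSucc + c (Fin.last m) := add_le_add_left hlast _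
      _ = b 0 + ∑ i, c i := by rw [Fin.sum_univ_castSucc, add_assoc]

/-- **Squared Hellinger subadditivity for Markov chains.**
`P` and `Q` are joint distributions on `n = m + 1 ≥ 2` finitely-valued variables
`X_0 → X_1 → ⋯ → X_m`, each satisfying the Markov chain property, expressed
equivalently via marginals: for every edge `(i.castSucc, i.succ)` the marginal on
`{0,…,i+1}` times the marginal on `{i}` equals the marginal on `{0,…,i}` times the
marginal on `{i, i+1}`, pointwise.  Then
`H²(P,Q) ≤ H²(P_{X_0},Q_{X_0}) + ∑ i, H²(P_{X_i,X_{i+1}}, Q_{X_i,X_{i+1}})`;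
in particular, if `H²(P,Q) ≥ ε` then some consecutive pair satisfies
`H²(P_{X_i,X_{i+1}}, Q_{X_i,X_{i+1}}) ≥ ε / n`. -/
theorem sqHellinger_subadditive_markov_chain
    {m : ℕ} (hm : 0 < m) (α : Fin (m + 1) → Type*) [∀ i, Fintype (α i)]
    (P Q : (∀ i, α i) → ℝ)
    (hP0 : ∀ x, 0 ≤ P x) (hP1 : ∑ x, P x = 1)
    (hQ0 : ∀ x, 0 ≤ Q x) (hQ1 : ∑ x, Q x = 1)
    (hPfac : ∀ i : Fin m, ∀ x : ∀ j, α j,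
      marg P (Finset.Iic i.succ) (fun j => x j.1) *
          marg P {i.castSucc} (fun j => x j.1) =
        marg P (Finset.Iic i.castSucc) (fun j => x j.1) *
          marg P {i.castSucc, i.succ} (fun j => x j.1))
    (hQfac : ∀ i : Fin m, ∀ x : ∀ j, α j,
      marg Q (Finset.Iic i.succ) (fun j => x j.1) *
          marg Q {i.castSucc} (fun j => x j.1) =
        marg Q (Finset.Iic i.castSucc) (fun j => x j.1) *
          marg Q {i.castSucc, i.succ} (fun j => x j.1)) :
    sqHellinger P Q ≤
        sqHellinger (marg P {(0 : Fin (m + 1))}) (marg Q {(0 : Fin (m + 1))}) +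
          ∑ i : Fin m,
            sqHellinger (marg P {i.castSucc, i.succ}) (marg Q {i.castSucc, i.succ}) ∧
      ∀ ε : ℝ, sqHellinger P Q ≥ ε →
        ∃ i : Fin m,
          sqHellinger (marg P {i.castSucc, i.succ}) (marg Q {i.castSucc, i.succ}) ≥
            ε / (m + 1 : ℝ) := by
  have hstep : ∀ i : Fin m,
      sqHellinger (marg P (Iic i.succ)) (marg Q (Iic i.succ)) ≤
        sqHellinger (marg P (Iic i.castSucc)) (marg Q (Iic i.castSucc)) +
          sqHellinger (marg P {i.castSucc, i.succ}) (marg Q {i.castSucc, i.succ}) := fun i => by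
    have hI : Iic i.succ = insert i.succ (Iic i.castSucc) := by
      ext j
      rw [mem_insert, mem_Iic, mem_Iic, le_iff_lt_or_eq, ← Fin.le_castSucc_iff, or_comm]
    rw [hI]
    exact sqHellinger_marg_insert_le hP0 hP1 hQ0 hQ1 (mem_Iic.2 le_rfl)
      (by simp) (fun x => hI ▸ hPfac i x) (fun x => hI ▸ hQfac i x)
  have hchain := Fin.apply_last_le_apply_zero_add_sum
    (b := fun k => sqHellinger (marg P (Iic k)) (marg Q (Iic k))) hstep
  have hlast : Iic (Fin.last m) = univ := by ext; simp [Fin.le_last]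
  have hzero : Iic (0 : Fin (m + 1)) = {0} := by ext; simp
  rw [hlast, hzero, sqHellinger_marg_univ] at hchain
  refine ⟨hchain, fun ε hε => ?_⟩
  by_contra! hsmall
  let i₀ : Fin m := ⟨0, hm⟩
  have hfirst : sqHellinger (marg P {0}) (marg Q {0}) ≤
      sqHellinger (marg P {i₀.castSucc, i₀.succ}) (marg Q {i₀.castSucc, i₀.succ}) :=
    sqHellinger_marg_le_of_subset (singleton_subset_iff.2 (mem_insert_self _ _)) hP0 hQ0
  have hsum := sum_lt_sum_of_nonempty ⟨i₀, mem_univ _⟩ fun i _ => hsmall i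
  rw [sum_const, card_univ, Fintype.card_fin, nsmul_eq_mul] at hsum
  have hε' : (m + 1 : ℝ) * (ε / (m + 1)) = ε := by field_simp
  linarith [hsmall i₀]
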